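/- arXiv:1904.02773 — 5 statements merged into one kernel-verified Lean document; each statement's English description precedes it below -/
import Mathlib

section
/- Let H be a real Hilbert space, m > 0, and let f, g : H → ℝ be differentiable and m-strongly convex, with points w_f*, w_g* ∈ H satisfying ∇f(w_f*) = 0 and ∇g(w_g*) = 0. Then ‖w_f* − w_g*‖ ≤ (1/m)‖∇f(w_g*) − ∇g(w_g*)‖. -/
/-!
The first-order strong convexity inequality makes `∇f` `m`-strongly monotone. Testing this at
`w_g*` and `w_f*`, where `∇f(w_f*) = 0` and `∇f(w_g*) = ∇f(w_g*) − ∇g(w_g*)`, and applying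
Cauchy–Schwarz gives `m‖w_f* − w_g*‖² ≤ ‖∇f(w_g*) − ∇g(w_g*)‖ ‖w_f* − w_g*‖`.
-/

open RealInnerProductSpace

section StrongConvexity

variable {H : Type*} [NormedAddCommGroup H] [InnerProductSpace ℝ H]

/-- Adding the first-order strong convexity inequality at `(x, y)` and at `(y, x)`. -/
theorem strongly_monotone_of_first_order_strong_convexity {m : ℝ} {f : H → ℝ} {f' : H → H}
    (hsc : ∀ x y : H, f x + ⟪f' x, y - x⟫ + (m / 2) * ‖y - x‖ ^ 2 ≤ f y) (x y : H) :
    m * ‖x - y‖ ^ 2 ≤ ⟪f' x - f' y, x - y⟫ := by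
  have hxy := hsc x y
  have hyx := hsc y x
  have hinner : ⟪f' x - f' y, x - y⟫ = -⟪f' x, y - x⟫ - ⟪f' y, x - y⟫ := by
    rw [inner_sub_left, ← inner_neg_right, neg_sub]
  rw [hinner]
  rw [norm_sub_rev y x] at hxy
  linarith

theorem norm_le_div_of_mul_sq_le_inner {m : ℝ} (hm : 0 < m) {u v : H}
    (h : m * ‖v‖ ^ 2 ≤ ⟪u, v⟫) : ‖v‖ ≤ ‖u‖ / m := by
  rw [le_div_iff₀ hm]
  have hcs : m * ‖v‖ * ‖v‖ ≤ ‖u‖ * ‖v‖ := by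
    nlinarith [real_inner_le_norm u v]
  rcases (norm_nonneg v).eq_or_lt with hv | hv
  · rw [← hv]
    simp
  · linarith [le_of_mul_le_mul_right hcs hv]

end StrongConvexity

theorem minimizer_change_le_gradient_difference_general
    {H : Type*} [NormedAddCommGroup H] [InnerProductSpace ℝ H]
    (m : ℝ) (hm : 0 < m) (f : H → ℝ) (f' g' : H → H)
    (hscf : ∀ x y : H, f x + (inner ℝ (f' x) (y - x) : ℝ) + (m / 2) * ‖y - x‖ ^ 2 ≤ f y)
    (wf wg : H) (hminf : f' wf = 0) (hming : g' wg = 0) :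
    ‖wf - wg‖ ≤ (1 / m) * ‖f' wg - g' wg‖ := by
  have hmono := strongly_monotone_of_first_order_strong_convexity hscf wg wf
  rw [hminf, sub_zero, ← sub_zero (f' wg), ← hming] at hmono
  rw [norm_sub_rev, one_div_mul_eq_div]
  exact norm_le_div_of_mul_sq_le_inner hm hmono

/-- For differentiable `m`-strongly convex `f, g` with critical points
`w_f*, w_g*`, one has `‖w_f* − w_g*‖ ≤ (1/m)‖∇f(w_g*) − ∇g(w_g*)‖`. -/
theorem minimizer_change_le_gradient_difference
    {H : Type*} [NormedAddCommGroup H] [InnerProductSpace ℝ H] [CompleteSpace H]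
    (m : ℝ) (hm : 0 < m) (f g : H → ℝ) (f' g' : H → H)
    (hgradf : ∀ x, HasGradientAt f (f' x) x)
    (hgradg : ∀ x, HasGradientAt g (g' x) x)
    (hscf : ∀ x y : H, f x + (inner ℝ (f' x) (y - x) : ℝ) + (m / 2) * ‖y - x‖ ^ 2 ≤ f y)
    (hscg : ∀ x y : H, g x + (inner ℝ (g' x) (y - x) : ℝ) + (m / 2) * ‖y - x‖ ^ 2 ≤ g y)
    (wf wg : H) (hminf : f' wf = 0) (hming : g' wg = 0) :
    ‖wf - wg‖ ≤ (1 / m) * ‖f' wg - g' wg‖ :=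
  minimizer_change_le_gradient_difference_general m hm f f' g' hscf wf wg hminf hming
end

section
/- Let H be a real Hilbert space, m > 0, T ≥ 2 a natural number, and for each n = 2, …, T+1 let f_n : H → ℝ be differentiable and m-strongly convex with a point w_n* ∈ H satisfying ∇f_n(w_n*) = 0. Suppose there are nonnegative reals S_n (n = 2, …, T) with ‖∇f_{n+1}(w) − ∇f_n(w)‖ ≤ S_n for all w ∈ H, and suppose Σ_{n=2}^{T} S_n² ≤ G_b. Then Σ_{n=2}^{T} ‖w_{n+1}* − w_n*‖² ≤ G_b / m². -/
/-!
Adding the strong-convexity inequality at `(x, y)` and at `(y, x)` shows that the gradient of an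
`m`-strongly convex function is `m`-strongly monotone, so by Cauchy–Schwarz
`m ‖y - x‖ ≤ ‖∇f y - ∇f x‖`. Taking `y` to be the minimizer `w_{n+1}*` of `f_{n+1}` and `x = w_n*`,
where `∇f_n` vanishes, gives `m ‖w_{n+1}* - w_n*‖ ≤ ‖∇f_{n+1}(w_n*) - ∇f_n(w_n*)‖ ≤ S_n`;
squaring and summing finishes the proof.
-/

open scoped RealInnerProductSpace

section StronglyConvex

variable {E : Type*} [NormedAddCommGroup E] [InnerProductSpace ℝ E]
  {f : E → ℝ} {f' : E → E} {m : ℝ}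

theorem mul_norm_sq_le_inner_sub_of_strongConvex
    (hsc : ∀ x y, f x + ⟪f' x, y - x⟫ + m / 2 * ‖y - x‖ ^ 2 ≤ f y) (x y : E) :
    m * ‖y - x‖ ^ 2 ≤ ⟪f' y - f' x, y - x⟫ := by
  have hxy := hsc x y
  have hyx := hsc y x
  rw [norm_sub_rev x y, ← neg_sub y x, inner_neg_right] at hyx
  rw [inner_sub_left]
  linarith

theorem mul_norm_sub_le_norm_sub_of_strongConvex
    (hsc : ∀ x y, f x + ⟪f' x, y - x⟫ + m / 2 * ‖y - x‖ ^ 2 ≤ f y) (x y : E) :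
    m * ‖y - x‖ ≤ ‖f' y - f' x‖ := by
  rcases (norm_nonneg (y - x)).eq_or_lt with hxy | hxy
  · rw [← hxy, mul_zero]
    exact norm_nonneg _
  · refine le_of_mul_le_mul_right ?_ hxy
    calc m * ‖y - x‖ * ‖y - x‖ = m * ‖y - x‖ ^ 2 := by ring
      _ ≤ ⟪f' y - f' x, y - x⟫ := mul_norm_sq_le_inner_sub_of_strongConvex hsc x y
      _ ≤ ‖f' y - f' x‖ * ‖y - x‖ := real_inner_le_norm _ _

theorem norm_sub_le_norm_div_of_strongConvex
    (hsc : ∀ x y, f x + ⟪f' x, y - x⟫ + m / 2 * ‖y - x‖ ^ 2 ≤ f y) (hm : 0 < m)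
    {w : E} (hw : f' w = 0) (x : E) :
    ‖w - x‖ ≤ ‖f' x‖ / m := by
  rw [le_div_iff₀' hm]
  simpa only [hw, zero_sub, norm_neg] using mul_norm_sub_le_norm_sub_of_strongConvex hsc x w

end StronglyConvex

theorem total_minimizer_variation_le_gradient_variation_general
    {H : Type*} [NormedAddCommGroup H] [InnerProductSpace ℝ H]
    (m : ℝ) (hm : 0 < m) (T : ℕ)
    (f : ℕ → H → ℝ) (f' : ℕ → H → H) (wstar : ℕ → H)
    (hsc : ∀ n, 2 ≤ n → n ≤ T + 1 → ∀ x y : H,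
      f n x + (inner ℝ (f' n x) (y - x) : ℝ) + (m / 2) * ‖y - x‖ ^ 2 ≤ f n y)
    (hmin : ∀ n, 2 ≤ n → n ≤ T + 1 → f' n (wstar n) = 0)
    (S : ℕ → ℝ)
    (hvar : ∀ n, 2 ≤ n → n ≤ T → ∀ w : H, ‖f' (n + 1) w - f' n w‖ ≤ S n)
    (Gb : ℝ) (hGb : ∑ n ∈ Finset.Icc 2 T, (S n) ^ 2 ≤ Gb) :
    ∑ n ∈ Finset.Icc 2 T, ‖wstar (n + 1) - wstar n‖ ^ 2 ≤ Gb / m ^ 2 := by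
  have step : ∀ n ∈ Finset.Icc 2 T, ‖wstar (n + 1) - wstar n‖ ^ 2 ≤ S n ^ 2 / m ^ 2 := by
    intro n hn
    obtain ⟨h2n, hnT⟩ := Finset.mem_Icc.mp hn
    have hdist := norm_sub_le_norm_div_of_strongConvex (hsc (n + 1) (by omega) (by omega)) hm
      (hmin (n + 1) (by omega) (by omega)) (wstar n)
    have hgap : ‖f' (n + 1) (wstar n)‖ ≤ S n := by
      simpa only [hmin n h2n (by omega), sub_zero] using hvar n h2n hnT (wstar n)
    rw [← div_pow]
    exact pow_le_pow_left₀ (norm_nonneg _) (hdist.trans (by gcongr)) 2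
  calc ∑ n ∈ Finset.Icc 2 T, ‖wstar (n + 1) - wstar n‖ ^ 2
      ≤ ∑ n ∈ Finset.Icc 2 T, S n ^ 2 / m ^ 2 := Finset.sum_le_sum step
    _ = (∑ n ∈ Finset.Icc 2 T, S n ^ 2) / m ^ 2 := (Finset.sum_div ..).symm
    _ ≤ Gb / m ^ 2 := by gcongr

/-- If each `f_n` (n = 2, …, T+1) is differentiable, `m`-strongly convex with
critical point `w_n*`, and the gradient variations are uniformly bounded by `S_n` with
`Σ_{n=2}^T S_n² ≤ G_b`, then `Σ_{n=2}^T ‖w_{n+1}* − w_n*‖² ≤ G_b/m²`. -/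
theorem total_minimizer_variation_le_gradient_variation
    {H : Type*} [NormedAddCommGroup H] [InnerProductSpace ℝ H] [CompleteSpace H]
    (m : ℝ) (hm : 0 < m) (T : ℕ) (hT : 2 ≤ T)
    (f : ℕ → H → ℝ) (f' : ℕ → H → H) (wstar : ℕ → H)
    (hgrad : ∀ n, 2 ≤ n → n ≤ T + 1 → ∀ x, HasGradientAt (f n) (f' n x) x)
    (hsc : ∀ n, 2 ≤ n → n ≤ T + 1 → ∀ x y : H,
      f n x + (inner ℝ (f' n x) (y - x) : ℝ) + (m / 2) * ‖y - x‖ ^ 2 ≤ f n y)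
    (hmin : ∀ n, 2 ≤ n → n ≤ T + 1 → f' n (wstar n) = 0)
    (S : ℕ → ℝ) (hS : ∀ n, 2 ≤ n → n ≤ T → 0 ≤ S n)
    (hvar : ∀ n, 2 ≤ n → n ≤ T → ∀ w : H, ‖f' (n + 1) w - f' n w‖ ≤ S n)
    (Gb : ℝ) (hGb : ∑ n ∈ Finset.Icc 2 T, (S n) ^ 2 ≤ Gb) :
    ∑ n ∈ Finset.Icc 2 T, ‖wstar (n + 1) - wstar n‖ ^ 2 ≤ Gb / m ^ 2 :=
  total_minimizer_variation_le_gradient_variation_general m hm T f f' wstar hsc hmin S hvar Gb hGb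
end

section
/- Let H be a real Hilbert space, m > 0, ε ≥ 0, ρ ≥ 0, and let f : H → ℝ be differentiable and m-strongly convex with w* ∈ H satisfying ∇f(w*) = 0. Let (Ω, F, P) be a probability space and W : Ω → H a random variable such that f(W) is integrable, ‖W − w*‖² and ‖W − w'‖² are integrable, and E[f(W)] − f(w*) ≤ ε. Then for any point w' ∈ H with ‖w' − w*‖ ≤ ρ, one has E[‖W − w'‖²] ≤ (√(2ε/m) + ρ)². -/
/-!
Strong convexity at the critical point `w*` gives `(m/2)‖W − w*‖² ≤ f(W) − f(w*)` pointwise, so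
`E‖W − w*‖² ≤ 2ε/m`. Re-centring at `w'` costs at most `‖w' − w*‖` in root mean square:
`‖W − w'‖ ≤ ‖W − w*‖ + ‖w' − w*‖`, and `E‖W − w*‖ ≤ √(E‖W − w*‖²)` by Jensen.
-/

open MeasureTheory

section Probability

variable {Ω : Type*} [MeasurableSpace Ω] {μ : Measure Ω} [IsProbabilityMeasure μ]

lemma sq_integral_le_integral_sq {X : Ω → ℝ} (hX : MemLp X 2 μ) :
    (∫ ω, X ω ∂μ) ^ 2 ≤ ∫ ω, X ω ^ 2 ∂μ := by
  have h := ProbabilityTheory.variance_nonneg X μ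
  rw [ProbabilityTheory.variance_eq_sub hX] at h
  simpa using h

lemma integral_le_sqrt_integral_sq {X : Ω → ℝ} (hX : MemLp X 2 μ) :
    ∫ ω, X ω ∂μ ≤ Real.sqrt (∫ ω, X ω ^ 2 ∂μ) :=
  Real.le_sqrt_of_sq_le (sq_integral_le_integral_sq hX)

lemma integral_norm_sub_sq_le {E : Type*} [NormedAddCommGroup E] {W : Ω → E}
    (hW : AEStronglyMeasurable W μ) (a b : E) (ha : Integrable (fun ω => ‖W ω - a‖ ^ 2) μ) :
    ∫ ω, ‖W ω - b‖ ^ 2 ∂μ ≤ (Real.sqrt (∫ ω, ‖W ω - a‖ ^ 2 ∂μ) + ‖b - a‖) ^ 2 := by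
  set X : Ω → ℝ := fun ω => ‖W ω - a‖
  set d := ‖b - a‖
  have hX2 : MemLp X 2 μ :=
    (memLp_two_iff_integrable_sq (hW.sub aestronglyMeasurable_const).norm).2 ha
  have hX : Integrable X μ := hX2.integrable one_le_two
  have hpoint : ∀ ω, ‖W ω - b‖ ^ 2 ≤ X ω ^ 2 + 2 * d * X ω + d ^ 2 := fun ω => by
    have htri : ‖W ω - b‖ ≤ X ω + d := by
      simpa only [sub_add_sub_cancel, norm_sub_rev a b] using norm_add_le (W ω - a) (a - b)
    nlinarith [pow_le_pow_left₀ (norm_nonneg _) htri 2]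
  have hbound : ∫ ω, ‖W ω - b‖ ^ 2 ∂μ ≤ ∫ ω, X ω ^ 2 ∂μ + 2 * d * ∫ ω, X ω ∂μ + d ^ 2 := by
    have hint : Integrable (fun ω => X ω ^ 2 + 2 * d * X ω) μ := ha.add (hX.const_mul _)
    calc ∫ ω, ‖W ω - b‖ ^ 2 ∂μ ≤ ∫ ω, (X ω ^ 2 + 2 * d * X ω + d ^ 2) ∂μ :=
          integral_mono_of_nonneg (ae_of_all _ fun _ => by positivity)
            (hint.add (integrable_const _)) (ae_of_all _ hpoint)
      _ = ∫ ω, X ω ^ 2 ∂μ + 2 * d * ∫ ω, X ω ∂μ + d ^ 2 := by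
          rw [integral_add hint (integrable_const _), integral_add ha (hX.const_mul _),
            integral_const_mul, integral_const, probReal_univ, one_smul]
  have hmean := integral_le_sqrt_integral_sq hX2
  have hsq := Real.sq_sqrt (integral_nonneg fun ω => sq_nonneg (X ω) : 0 ≤ ∫ ω, X ω ^ 2 ∂μ)
  nlinarith [norm_nonneg (b - a)]

end Probability

section StrongConvexity

variable {H : Type*} [NormedAddCommGroup H] [InnerProductSpace ℝ H] {f : H → ℝ} {f' : H → H}
  {m : ℝ} {wstar : H}

lemma half_mul_sq_norm_sub_le_sub_of_grad_eq_zero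
    (hsc : ∀ x y : H, f x + (inner ℝ (f' x) (y - x) : ℝ) + (m / 2) * ‖y - x‖ ^ 2 ≤ f y)
    (hmin : f' wstar = 0) (y : H) :
    (m / 2) * ‖y - wstar‖ ^ 2 ≤ f y - f wstar := by
  have h := hsc wstar y
  rw [hmin, inner_zero_left] at h
  linarith

lemma integral_norm_sub_sq_le_of_excess {ε : ℝ} (hm : 0 < m)
    (hsc : ∀ x y : H, f x + (inner ℝ (f' x) (y - x) : ℝ) + (m / 2) * ‖y - x‖ ^ 2 ≤ f y)
    (hmin : f' wstar = 0)
    {Ω : Type*} [MeasurableSpace Ω] {μ : Measure Ω} [IsProbabilityMeasure μ] {W : Ω → H}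
    (hfW : Integrable (fun ω => f (W ω)) μ) (hdist : Integrable (fun ω => ‖W ω - wstar‖ ^ 2) μ)
    (hexcess : ∫ ω, f (W ω) ∂μ - f wstar ≤ ε) :
    ∫ ω, ‖W ω - wstar‖ ^ 2 ∂μ ≤ 2 * ε / m := by
  have h : ∫ ω, (m / 2) * ‖W ω - wstar‖ ^ 2 ∂μ ≤ ∫ ω, (f (W ω) - f wstar) ∂μ :=
    integral_mono (hdist.const_mul _) (hfW.sub (integrable_const _))
      fun ω => half_mul_sq_norm_sub_le_sub_of_grad_eq_zero hsc hmin (W ω)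
  rw [integral_const_mul, integral_sub hfW (integrable_const _), integral_const, probReal_univ,
    one_smul] at h
  rw [le_div_iff₀ hm]
  linarith

end StrongConvexity

theorem tracking_bound_expected_sq_distance_general
    {H : Type*} [NormedAddCommGroup H] [InnerProductSpace ℝ H]
    (m ε ρ : ℝ) (hm : 0 < m)
    (f : H → ℝ) (f' : H → H)
    (hsc : ∀ x y : H, f x + (inner ℝ (f' x) (y - x) : ℝ) + (m / 2) * ‖y - x‖ ^ 2 ≤ f y)
    (wstar : H) (hmin : f' wstar = 0)
    {Ω : Type*} [MeasurableSpace Ω] (P : Measure Ω) [IsProbabilityMeasure P]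
    (W : Ω → H) (hWmeas : AEStronglyMeasurable W P)
    (hfW : Integrable (fun ω => f (W ω)) P)
    (w' : H)
    (hdistsq : Integrable (fun ω => ‖W ω - wstar‖ ^ 2) P)
    (hexcess : ∫ ω, f (W ω) ∂P - f wstar ≤ ε)
    (hclose : ‖w' - wstar‖ ≤ ρ) :
    ∫ ω, ‖W ω - w'‖ ^ 2 ∂P ≤ (Real.sqrt (2 * ε / m) + ρ) ^ 2 := by
  have hmoment := integral_norm_sub_sq_le_of_excess hm hsc hmin hfW hdistsq hexcess
  calc ∫ ω, ‖W ω - w'‖ ^ 2 ∂P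
      ≤ (Real.sqrt (∫ ω, ‖W ω - wstar‖ ^ 2 ∂P) + ‖w' - wstar‖) ^ 2 :=
        integral_norm_sub_sq_le hWmeas wstar w' hdistsq
    _ ≤ (Real.sqrt (2 * ε / m) + ρ) ^ 2 := by gcongr

/-- Tracking bound. If `f` is `m`-strongly convex with `∇f(w*) = 0`,
`E[f(W)] − f(w*) ≤ ε`, and `‖w' − w*‖ ≤ ρ`, then `E[‖W − w'‖²] ≤ (√(2ε/m) + ρ)²`. -/
theorem tracking_bound_expected_sq_distance
    {H : Type*} [NormedAddCommGroup H] [InnerProductSpace ℝ H] [CompleteSpace H]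
    (m ε ρ : ℝ) (hm : 0 < m) (hε : 0 ≤ ε) (hρ : 0 ≤ ρ)
    (f : H → ℝ) (f' : H → H)
    (hgrad : ∀ x, HasGradientAt f (f' x) x)
    (hsc : ∀ x y : H, f x + (inner ℝ (f' x) (y - x) : ℝ) + (m / 2) * ‖y - x‖ ^ 2 ≤ f y)
    (wstar : H) (hmin : f' wstar = 0)
    {Ω : Type*} [MeasurableSpace Ω] (P : Measure Ω) [IsProbabilityMeasure P]
    (W : Ω → H) (hWmeas : AEStronglyMeasurable W P)
    (hfW : Integrable (fun ω => f (W ω)) P)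
    (w' : H)
    (hdistsq : Integrable (fun ω => ‖W ω - wstar‖ ^ 2) P)
    (hdistsq' : Integrable (fun ω => ‖W ω - w'‖ ^ 2) P)
    (hexcess : ∫ ω, f (W ω) ∂P - f wstar ≤ ε)
    (hclose : ‖w' - wstar‖ ≤ ρ) :
    ∫ ω, ‖W ω - w'‖ ^ 2 ∂P ≤ (Real.sqrt (2 * ε / m) + ρ) ^ 2 :=
  tracking_bound_expected_sq_distance_general m ε ρ hm f f' hsc wstar hmin P W hWmeas hfW w' hdistsq
    hexcess hclose
end

section
/- Let H be a real Hilbert space, m > 0, and let f, g : H → ℝ be differentiable and m-strongly convex, with w_f*, w_g* ∈ H satisfying ∇f(w_f*) = 0 and ∇g(w_g*) = 0. For any points u, v ∈ H and any vectors G_u, G_v ∈ H, define the one-step change estimate ρ̃ = ‖u − v‖ + (1/m)‖G_u‖ + (1/m)‖G_v‖. Then ρ̃ − ‖w_f* − w_g*‖ ≤ (2/m)‖∇f(u)‖ + (2/m)‖∇g(v)‖ + (1/m)‖∇f(u) − G_u‖ + (1/m)‖∇g(v) − G_v‖. -/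
/-!
Strong convexity makes the gradient strongly monotone, hence `m ‖x - y‖ ≤ ‖∇f x - ∇f y‖`;
at a critical point this says `‖u - w_f*‖ ≤ ‖∇f u‖ / m`. Routing `u - v` through `w_f*` and `w_g*`
and bounding `‖G_u‖ ≤ ‖∇f u‖ + ‖∇f u - G_u‖` (likewise for `G_v`) gives the overshoot bound.
-/

section StronglyConvex

variable {H : Type*} [NormedAddCommGroup H] [InnerProductSpace ℝ H]
  {m : ℝ} {f : H → ℝ} {f' : H → H}

theorem strongly_monotone_of_strongly_convex
    (hsc : ∀ x y : H, f x + inner ℝ (f' x) (y - x) + (m / 2) * ‖y - x‖ ^ 2 ≤ f y) (x y : H) :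
    m * ‖x - y‖ ^ 2 ≤ inner ℝ (f' x - f' y) (x - y) := by
  have hxy := hsc x y
  have hyx := hsc y x
  rw [norm_sub_rev y x] at hxy
  have hflip : inner ℝ (f' x) (x - y) = -inner ℝ (f' x) (y - x) := by
    rw [← inner_neg_right, neg_sub]
  rw [inner_sub_left, hflip]
  linarith

theorem mul_norm_sub_le_norm_sub_of_strongly_convex
    (hsc : ∀ x y : H, f x + inner ℝ (f' x) (y - x) + (m / 2) * ‖y - x‖ ^ 2 ≤ f y) (x y : H) :
    m * ‖x - y‖ ≤ ‖f' x - f' y‖ := by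
  rcases (norm_nonneg (x - y)).eq_or_lt with hxy | hxy
  · rw [← hxy, mul_zero]
    exact norm_nonneg _
  · refine le_of_mul_le_mul_right ?_ hxy
    calc m * ‖x - y‖ * ‖x - y‖ = m * ‖x - y‖ ^ 2 := by ring
      _ ≤ inner ℝ (f' x - f' y) (x - y) := strongly_monotone_of_strongly_convex hsc x y
      _ ≤ ‖f' x - f' y‖ * ‖x - y‖ := real_inner_le_norm _ _

theorem norm_sub_le_of_strongly_convex_of_grad_eq_zero (hm : 0 < m)
    (hsc : ∀ x y : H, f x + inner ℝ (f' x) (y - x) + (m / 2) * ‖y - x‖ ^ 2 ≤ f y)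
    {w : H} (hw : f' w = 0) (x : H) :
    ‖x - w‖ ≤ 1 / m * ‖f' x‖ := by
  rw [one_div_mul_eq_div, le_div_iff₀' hm]
  simpa [hw] using mul_norm_sub_le_norm_sub_of_strongly_convex hsc x w

end StronglyConvex

theorem direct_estimate_overshoot_bound_general
    {H : Type*} [NormedAddCommGroup H] [InnerProductSpace ℝ H]
    (m : ℝ) (hm : 0 < m) (f g : H → ℝ) (f' g' : H → H)
    (hscf : ∀ x y : H, f x + (inner ℝ (f' x) (y - x) : ℝ) + (m / 2) * ‖y - x‖ ^ 2 ≤ f y)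
    (hscg : ∀ x y : H, g x + (inner ℝ (g' x) (y - x) : ℝ) + (m / 2) * ‖y - x‖ ^ 2 ≤ g y)
    (wf wg : H) (hminf : f' wf = 0) (hming : g' wg = 0)
    (u v Gu Gv : H) :
    (‖u - v‖ + (1 / m) * ‖Gu‖ + (1 / m) * ‖Gv‖) - ‖wf - wg‖ ≤
      (2 / m) * ‖f' u‖ + (2 / m) * ‖g' v‖ +
        (1 / m) * ‖f' u - Gu‖ + (1 / m) * ‖g' v - Gv‖ := by
  have hu := norm_sub_le_of_strongly_convex_of_grad_eq_zero hm hscf hminf u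
  have hv := norm_sub_le_of_strongly_convex_of_grad_eq_zero hm hscg hming v
  have hpath : ‖u - v‖ ≤ ‖u - wf‖ + ‖wf - wg‖ + ‖v - wg‖ := by
    rw [norm_sub_rev v wg]
    exact (norm_sub_le_norm_sub_add_norm_sub u wg v).trans
      (add_le_add_left (norm_sub_le_norm_sub_add_norm_sub u wf wg) _)
  have hGu : 1 / m * ‖Gu‖ ≤ 1 / m * (‖f' u‖ + ‖f' u - Gu‖) := by
    gcongr
    exact norm_le_norm_add_norm_sub _ _
  have hGv : 1 / m * ‖Gv‖ ≤ 1 / m * (‖g' v‖ + ‖g' v - Gv‖) := by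
    gcongr
    exact norm_le_norm_add_norm_sub _ _
  have htwo : 2 / m = 1 / m + 1 / m := by ring
  rw [htwo]
  linarith

/-- Overshoot of the direct estimate
`ρ̃ = ‖u − v‖ + (1/m)‖G_u‖ + (1/m)‖G_v‖` above the true change `‖w_f* − w_g*‖` is bounded by
`(2/m)‖∇f(u)‖ + (2/m)‖∇g(v)‖ + (1/m)‖∇f(u) − G_u‖ + (1/m)‖∇g(v) − G_v‖`. -/
theorem direct_estimate_overshoot_bound
    {H : Type*} [NormedAddCommGroup H] [InnerProductSpace ℝ H] [CompleteSpace H]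
    (m : ℝ) (hm : 0 < m) (f g : H → ℝ) (f' g' : H → H)
    (hgradf : ∀ x, HasGradientAt f (f' x) x)
    (hgradg : ∀ x, HasGradientAt g (g' x) x)
    (hscf : ∀ x y : H, f x + (inner ℝ (f' x) (y - x) : ℝ) + (m / 2) * ‖y - x‖ ^ 2 ≤ f y)
    (hscg : ∀ x y : H, g x + (inner ℝ (g' x) (y - x) : ℝ) + (m / 2) * ‖y - x‖ ^ 2 ≤ g y)
    (wf wg : H) (hminf : f' wf = 0) (hming : g' wg = 0)
    (u v Gu Gv : H) :
    (‖u - v‖ + (1 / m) * ‖Gu‖ + (1 / m) * ‖Gv‖) - ‖wf - wg‖ ≤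
      (2 / m) * ‖f' u‖ + (2 / m) * ‖g' v‖ +
        (1 / m) * ‖f' u - Gu‖ + (1 / m) * ‖g' v - Gv‖ :=
  direct_estimate_overshoot_bound_general m hm f g f' g' hscf hscg wf wg hminf hming u v Gu Gv
end

section
/- Let H be a real Hilbert space, m > 0, M > 0, ρ ≥ 0, ε_t ≥ 0, and natural numbers t < n. For each i = t, …, n let w_i* ∈ H and suppose ‖w_i* − w_{i−1}*‖ ≤ ρ for i = t+1, …, n. Let f_t : H → ℝ be differentiable and m-strongly convex with ∇f_t(w_t*) = 0, and let f_n : H → ℝ be differentiable with M-Lipschitz gradient and ∇f_n(w_n*) = 0. Then for any point w ∈ H with f_t(w) − f_t(w_t*) ≤ ε_t, one has f_n(w) − f_n(w_n*) ≤ (M/2)(√(2ε_t/m) + (n − t)ρ)². -/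
/-!
Strong convexity of `f_t` at its critical point `w_t*` turns the gap `f_t(w) − f_t(w_t*) ≤ ε_t`
into `‖w − w_t*‖ ≤ √(2ε_t/m)`; the triangle inequality along the minimizers gives
`‖w_n* − w_t*‖ ≤ (n − t)ρ`; and the descent lemma for the `M`-smooth `f_n` at its critical
point `w_n*` bounds `f_n(w) − f_n(w_n*)` by `(M/2)‖w − w_n*‖²`.
-/

open Real

theorem dist_le_mul_of_dist_pred_le {α : Type*} [PseudoMetricSpace α] {u : ℕ → α} {t n : ℕ}
    {ρ : ℝ} (htn : t ≤ n) (hstep : ∀ i, t + 1 ≤ i → i ≤ n → dist (u i) (u (i - 1)) ≤ ρ) :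
    dist (u n) (u t) ≤ ((n : ℝ) - t) * ρ := by
  have hsum : dist (u t) (u n) ≤ ∑ _i ∈ Finset.Ico t n, ρ :=
    dist_le_Ico_sum_of_dist_le htn fun {k} hk hkn => by
      simpa [dist_comm] using hstep (k + 1) (by omega) (by omega)
  rw [dist_comm]
  simpa [Nat.cast_sub htn] using hsum

section Hilbert

variable {H : Type*} [NormedAddCommGroup H] [InnerProductSpace ℝ H]

theorem norm_sub_le_sqrt_of_strongConvex {f : H → ℝ} {f' : H → H} {m ε : ℝ} (hm : 0 < m)
    (hsc : ∀ x y : H, f x + inner ℝ (f' x) (y - x) + (m / 2) * ‖y - x‖ ^ 2 ≤ f y)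
    {x₀ : H} (hx₀ : f' x₀ = 0) {w : H} (hw : f w - f x₀ ≤ ε) :
    ‖w - x₀‖ ≤ √(2 * ε / m) := by
  have hgrowth := hsc x₀ w
  rw [hx₀, inner_zero_left, add_zero] at hgrowth
  refine le_sqrt_of_sq_le ?_
  rw [le_div_iff₀ hm]
  linarith

variable [CompleteSpace H]

theorem le_add_inner_add_of_lipschitz_gradient {f : H → ℝ} {f' : H → H} {M : ℝ}
    (hgrad : ∀ x, HasGradientAt f (f' x) x) (hlip : ∀ x y : H, ‖f' x - f' y‖ ≤ M * ‖x - y‖)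
    (x y : H) : f y ≤ f x + inner ℝ (f' x) (y - x) + (M / 2) * ‖y - x‖ ^ 2 := by
  set v := y - x
  set φ : ℝ → ℝ := fun s => f (x + s • v) - s * inner ℝ (f' x) v - (M / 2) * s ^ 2 * ‖v‖ ^ 2
  have hφ' : ∀ s : ℝ, HasDerivAt φ
      (inner ℝ (f' (x + s • v)) v - inner ℝ (f' x) v - M * s * ‖v‖ ^ 2) s := by
    intro s
    have hline : HasDerivAt (fun s : ℝ => x + s • v) v s := by
      simpa using ((hasDerivAt_id s).smul_const v).const_add x
    have hcomp : HasDerivAt (fun s : ℝ => f (x + s • v)) (inner ℝ (f' (x + s • v)) v) s := by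
      have h := (hgrad (x + s • v)).hasFDerivAt.comp_hasDerivAt s hline
      simp only [InnerProductSpace.toDual_apply_apply] at h
      exact h
    have hquad := ((hasDerivAt_pow 2 s).const_mul (M / 2)).mul_const (‖v‖ ^ 2)
    refine ((hcomp.sub ((hasDerivAt_id s).mul_const (inner ℝ (f' x) v))).sub hquad).congr_deriv ?_
    simp only [one_mul, Nat.cast_ofNat]
    ring
  have hφ'_nonpos : ∀ s ∈ interior (Set.Icc (0 : ℝ) 1),
      inner ℝ (f' (x + s • v)) v - inner ℝ (f' x) v - M * s * ‖v‖ ^ 2 ≤ 0 := by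
    intro s hs
    rw [interior_Icc] at hs
    rw [sub_nonpos]
    calc inner ℝ (f' (x + s • v)) v - inner ℝ (f' x) v
        = inner ℝ (f' (x + s • v) - f' x) v := (inner_sub_left _ _ _).symm
      _ ≤ ‖f' (x + s • v) - f' x‖ * ‖v‖ := real_inner_le_norm _ _
      _ ≤ M * ‖x + s • v - x‖ * ‖v‖ := by gcongr; exact hlip _ _
      _ = M * s * ‖v‖ ^ 2 := by
        rw [add_sub_cancel_left, norm_smul, norm_of_nonneg hs.1.le]; ring
  have hanti : AntitoneOn φ (Set.Icc 0 1) :=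
    antitoneOn_of_hasDerivWithinAt_nonpos (convex_Icc 0 1)
      (fun s _ => (hφ' s).continuousAt.continuousWithinAt)
      (fun s _ => (hφ' s).hasDerivWithinAt) hφ'_nonpos
  have h01 := hanti (Set.left_mem_Icc.2 zero_le_one) (Set.right_mem_Icc.2 zero_le_one) zero_le_one
  simp only [φ, zero_smul, add_zero, one_smul, one_pow, add_sub_cancel, v] at h01
  linarith

theorem sub_le_of_lipschitz_gradient_of_gradient_eq_zero {f : H → ℝ} {f' : H → H} {M : ℝ}
    (hgrad : ∀ x, HasGradientAt f (f' x) x) (hlip : ∀ x y : H, ‖f' x - f' y‖ ≤ M * ‖x - y‖)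
    {x₀ : H} (hx₀ : f' x₀ = 0) (y : H) : f y - f x₀ ≤ (M / 2) * ‖y - x₀‖ ^ 2 := by
  have := le_add_inner_add_of_lipschitz_gradient hgrad hlip x₀ y
  rw [hx₀, inner_zero_left, add_zero] at this
  linarith

end Hilbert

theorem excess_risk_propagation_no_samples_general
    {H : Type*} [NormedAddCommGroup H] [InnerProductSpace ℝ H] [CompleteSpace H]
    (m M ρ εt : ℝ) (hm : 0 < m) (hM : 0 < M)
    (t n : ℕ) (htn : t < n) (wstar : ℕ → H)
    (hstep : ∀ i, t + 1 ≤ i → i ≤ n → ‖wstar i - wstar (i - 1)‖ ≤ ρ)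
    (ft : H → ℝ) (ft' : H → H)
    (hsct : ∀ x y : H, ft x + (inner ℝ (ft' x) (y - x) : ℝ) + (m / 2) * ‖y - x‖ ^ 2 ≤ ft y)
    (hmint : ft' (wstar t) = 0)
    (fn : H → ℝ) (fn' : H → H)
    (hgradn : ∀ x, HasGradientAt fn (fn' x) x)
    (hlipn : ∀ x y : H, ‖fn' x - fn' y‖ ≤ M * ‖x - y‖)
    (hminn : fn' (wstar n) = 0)
    (w : H) (hw : ft w - ft (wstar t) ≤ εt) :
    fn w - fn (wstar n) ≤
      (M / 2) * (Real.sqrt (2 * εt / m) + ((n : ℝ) - (t : ℝ)) * ρ) ^ 2 := by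
  have hnear_t : ‖w - wstar t‖ ≤ √(2 * εt / m) :=
    norm_sub_le_sqrt_of_strongConvex hm hsct hmint hw
  have hdrift : ‖wstar n - wstar t‖ ≤ ((n : ℝ) - t) * ρ := by
    simp only [← dist_eq_norm] at hstep ⊢
    exact dist_le_mul_of_dist_pred_le htn.le hstep
  have hnear_n : ‖w - wstar n‖ ≤ √(2 * εt / m) + ((n : ℝ) - t) * ρ :=
    (norm_sub_le_norm_sub_add_norm_sub w (wstar t) (wstar n)).trans
      (add_le_add hnear_t (by rwa [norm_sub_rev]))
  calc fn w - fn (wstar n) ≤ (M / 2) * ‖w - wstar n‖ ^ 2 :=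
        sub_le_of_lipschitz_gradient_of_gradient_eq_zero hgradn hlipn hminn w
    _ ≤ _ := by gcongr

/-- Excess-risk propagation when no samples are taken between time `t` and
time `n`: if `f_t` is `m`-strongly convex with minimizer `w_t*`, `f_n` has `M`-Lipschitz
gradient with critical point `w_n*`, the minimizers move by at most `ρ` per step, and
`f_t(w) − f_t(w_t*) ≤ ε_t`, then `f_n(w) − f_n(w_n*) ≤ (M/2)(√(2ε_t/m) + (n − t)ρ)²`. -/
theorem excess_risk_propagation_no_samples
    {H : Type*} [NormedAddCommGroup H] [InnerProductSpace ℝ H] [CompleteSpace H]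
    (m M ρ εt : ℝ) (hm : 0 < m) (hM : 0 < M) (hρ : 0 ≤ ρ) (hεt : 0 ≤ εt)
    (t n : ℕ) (htn : t < n) (wstar : ℕ → H)
    (hstep : ∀ i, t + 1 ≤ i → i ≤ n → ‖wstar i - wstar (i - 1)‖ ≤ ρ)
    (ft : H → ℝ) (ft' : H → H)
    (hgradt : ∀ x, HasGradientAt ft (ft' x) x)
    (hsct : ∀ x y : H, ft x + (inner ℝ (ft' x) (y - x) : ℝ) + (m / 2) * ‖y - x‖ ^ 2 ≤ ft y)
    (hmint : ft' (wstar t) = 0)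
    (fn : H → ℝ) (fn' : H → H)
    (hgradn : ∀ x, HasGradientAt fn (fn' x) x)
    (hlipn : ∀ x y : H, ‖fn' x - fn' y‖ ≤ M * ‖x - y‖)
    (hminn : fn' (wstar n) = 0)
    (w : H) (hw : ft w - ft (wstar t) ≤ εt) :
    fn w - fn (wstar n) ≤
      (M / 2) * (Real.sqrt (2 * εt / m) + ((n : ℝ) - (t : ℝ)) * ρ) ^ 2 :=
  excess_risk_propagation_no_samples_general m M ρ εt hm hM t n htn wstar hstep ft ft' hsct hmint fn
    fn' hgradn hlipn hminn w hw
end
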